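/- Let J_w ∈ ℝ^{m×p} have full column rank, J_x ∈ ℝ^{m×n}, r₀ ∈ ℝ^m, L ∈ ℝ^{q×n}, x₀ ∈ ℝ^n, α > 0, and set P⊥ = I_m - J_w (J_wᵀ J_w)⁻¹ J_wᵀ. A pair (δx, δw) ∈ ℝ^n × ℝ^p is a global minimizer of Φ̂(δx, δw) = (1/2)‖J_x δx + J_w δw + r₀‖₂² + (α/2)‖L(x₀ + δx)‖₂² if and only if δx is a global minimizer of ψ(δx) = (1/2)‖P⊥(J_x δx + r₀)‖₂² + (α/2)‖L(x₀ + δx)‖₂² and δw = -(J_wᵀ J_w)⁻¹ (J_wᵀ J_x δx + J_wᵀ r₀). Moreover, the minimum values of Φ̂ and ψ coincide. -/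
import Mathlib


open Matrix

/-- `(δx, δw)` is a global minimizer of the regularized linearized
objective `Φ̂(δx,δw) = (1/2)‖J_x δx + J_w δw + r₀‖² + (α/2)‖L(x₀+δx)‖²` iff `δx` is a
global minimizer of the projected objective
`ψ(δx) = (1/2)‖P⊥(J_x δx + r₀)‖² + (α/2)‖L(x₀+δx)‖²` and
`δw = -(J_wᵀJ_w)⁻¹(J_wᵀ J_x δx + J_wᵀ r₀)`; moreover the minimum values coincide. -/
theorem lap_projected_problem_equivalence {m p n q : ℕ}
    (Jw : Matrix (Fin m) (Fin p) ℝ) (Jx : Matrix (Fin m) (Fin n) ℝ)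
    (r0 : Fin m → ℝ) (L : Matrix (Fin q) (Fin n) ℝ) (x0 : Fin n → ℝ)
    (α : ℝ) (hα : 0 < α)
    (hrank : Jw.rank = p)
    (Pperp : Matrix (Fin m) (Fin m) ℝ)
    (hP : Pperp = 1 - Jw * (Jwᵀ * Jw)⁻¹ * Jwᵀ)
    (Φhat : (Fin n → ℝ) → (Fin p → ℝ) → ℝ)
    (hΦhat : Φhat = fun δx δw =>
      (1 / 2) * ((Jx *ᵥ δx + Jw *ᵥ δw + r0) ⬝ᵥ (Jx *ᵥ δx + Jw *ᵥ δw + r0)) +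
        (α / 2) * ((L *ᵥ (x0 + δx)) ⬝ᵥ (L *ᵥ (x0 + δx))))
    (ψ : (Fin n → ℝ) → ℝ)
    (hψ : ψ = fun δx =>
      (1 / 2) * ((Pperp *ᵥ (Jx *ᵥ δx + r0)) ⬝ᵥ (Pperp *ᵥ (Jx *ᵥ δx + r0))) +
        (α / 2) * ((L *ᵥ (x0 + δx)) ⬝ᵥ (L *ᵥ (x0 + δx))))
    (δwstar : (Fin n → ℝ) → Fin p → ℝ)
    (hstar : δwstar = fun δx =>
      -((Jwᵀ * Jw)⁻¹ *ᵥ (Jwᵀ *ᵥ (Jx *ᵥ δx) + Jwᵀ *ᵥ r0))) :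
    (∀ (δx : Fin n → ℝ) (δw : Fin p → ℝ),
      (∀ (δx' : Fin n → ℝ) (δw' : Fin p → ℝ), Φhat δx δw ≤ Φhat δx' δw') ↔
        ((∀ δx' : Fin n → ℝ, ψ δx ≤ ψ δx') ∧ δw = δwstar δx)) ∧
    (∀ (δx : Fin n → ℝ) (δw : Fin p → ℝ),
      (∀ (δx' : Fin n → ℝ) (δw' : Fin p → ℝ), Φhat δx δw ≤ Φhat δx' δw') →
        Φhat δx δw = ψ δx) := by
  classical
  set G : Matrix (Fin p) (Fin p) ℝ := (Jwᵀ * Jw)⁻¹ with hG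
  -- `Jwᵀ * Jw` is a unit
  have hrankA : (Jwᵀ * Jw).rank = p := by
    rw [Matrix.rank_transpose_mul_self, hrank]
  have hUnit : IsUnit (Jwᵀ * Jw) := by
    rw [← Matrix.mulVec_injective_iff_isUnit]
    -- injectivity via trivial kernel
    have hker : LinearMap.ker (Jwᵀ * Jw).mulVecLin = ⊥ := by
      have h1 := LinearMap.finrank_range_add_finrank_ker (Jwᵀ * Jw).mulVecLin
      have h2 : Module.finrank ℝ (Fin p → ℝ) = p := by simp
      rw [h2] at h1
      have h3 : Module.finrank ℝ (LinearMap.range (Jwᵀ * Jw).mulVecLin) = p := hrankA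
      have h4 : Module.finrank ℝ (LinearMap.ker (Jwᵀ * Jw).mulVecLin) = 0 := by omega
      exact Submodule.finrank_eq_zero.mp h4
    intro u v huv
    have h0 : (Jwᵀ * Jw).mulVecLin (u - v) = 0 := by
      simp only [Matrix.mulVecLin_apply, Matrix.mulVec_sub, huv, sub_self]
    have hmem : u - v ∈ LinearMap.ker (Jwᵀ * Jw).mulVecLin := h0
    rw [hker, Submodule.mem_bot] at hmem
    exact sub_eq_zero.mp hmem
  have hdet : IsUnit (Jwᵀ * Jw).det := (Matrix.isUnit_iff_isUnit_det _).mp hUnit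
  have hAG : (Jwᵀ * Jw) * G = 1 := Matrix.mul_nonsing_inv _ hdet
  -- `Jwᵀ * Pperp = 0`
  have hJP : Jwᵀ * Pperp = 0 := by
    rw [hP, Matrix.mul_sub, Matrix.mul_one]
    have : Jwᵀ * (Jw * G * Jwᵀ) = ((Jwᵀ * Jw) * G) * Jwᵀ := by
      simp only [Matrix.mul_assoc]
    rw [this, hAG, Matrix.one_mul, sub_self]
  -- Jw mulVec is injective
  have hJwinj : ∀ v : Fin p → ℝ, Jw *ᵥ v = 0 → v = 0 := by
    intro v hv
    have h1 : (Jwᵀ * Jw) *ᵥ v = 0 := by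
      rw [← Matrix.mulVec_mulVec, hv, Matrix.mulVec_zero]
    have h2 : G *ᵥ ((Jwᵀ * Jw) *ᵥ v) = v := by
      rw [Matrix.mulVec_mulVec, Matrix.nonsing_inv_mul _ hdet, Matrix.one_mulVec]
    rw [h1, Matrix.mulVec_zero] at h2
    exact h2.symm
  -- key identity : Φhat δx δw = ψ δx + (1/2) * ‖Jw (δw - δw*)‖²
  have key : ∀ (δx : Fin n → ℝ) (δw : Fin p → ℝ),
      Φhat δx δw = ψ δx +
        (1 / 2) * ((Jw *ᵥ (δw - δwstar δx)) ⬝ᵥ (Jw *ᵥ (δw - δwstar δx))) := by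
    intro δx δw
    set r : Fin m → ℝ := Jx *ᵥ δx + r0 with hr
    set v : Fin p → ℝ := δw - δwstar δx with hv
    -- decomposition of the residual
    have hdecomp : Jx *ᵥ δx + Jw *ᵥ δw + r0 = Jw *ᵥ v + Pperp *ᵥ r := by
      rw [hv, hstar, hP, hr]
      simp only [Matrix.mulVec_sub, Matrix.mulVec_neg, Matrix.sub_mulVec, Matrix.one_mulVec,
        Matrix.mulVec_add, Matrix.mulVec_mulVec, Matrix.sub_mul, Matrix.one_mul,
        Matrix.mul_assoc, sub_neg_eq_add]
      abel
    -- cross term vanishes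
    have hcross : (Jw *ᵥ v) ⬝ᵥ (Pperp *ᵥ r) = 0 := by
      have h1 : (Pperp *ᵥ r) ᵥ* Jw = (Jwᵀ * Pperp) *ᵥ r := by
        rw [← Matrix.mulVec_transpose, Matrix.mulVec_mulVec]
      rw [dotProduct_comm, Matrix.dotProduct_mulVec, h1, hJP,
        Matrix.zero_mulVec, zero_dotProduct]
    have hexp : (Jx *ᵥ δx + Jw *ᵥ δw + r0) ⬝ᵥ (Jx *ᵥ δx + Jw *ᵥ δw + r0)
        = (Pperp *ᵥ r) ⬝ᵥ (Pperp *ᵥ r) + (Jw *ᵥ v) ⬝ᵥ (Jw *ᵥ v) := by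
      rw [hdecomp]
      have := hcross
      have h2 : (Pperp *ᵥ r) ⬝ᵥ (Jw *ᵥ v) = 0 := by
        rw [dotProduct_comm]; exact hcross
      simp [add_dotProduct, dotProduct_add, hcross, h2]
      ring
    rw [hΦhat, hψ]
    simp only [hr] at hexp ⊢
    rw [hexp]
    ring
  -- basic facts about dot products
  have hnn : ∀ (k : ℕ) (w : Fin k → ℝ), 0 ≤ w ⬝ᵥ w := by
    intro k w
    exact Finset.sum_nonneg fun i _ => mul_self_nonneg (w i)
  -- Φhat at the optimal δw equals ψ
  have hval : ∀ δx : Fin n → ℝ, Φhat δx (δwstar δx) = ψ δx := by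
    intro δx
    rw [key δx (δwstar δx)]
    simp [Matrix.mulVec_zero]
  constructor
  · intro δx δw
    constructor
    · intro hmin
      -- first : δw = δwstar δx
      have h1 : Φhat δx δw ≤ Φhat δx (δwstar δx) := hmin δx (δwstar δx)
      rw [hval δx, key δx δw] at h1
      have h2 : (Jw *ᵥ (δw - δwstar δx)) ⬝ᵥ (Jw *ᵥ (δw - δwstar δx)) ≤ 0 := by
        nlinarith [hnn m (Jw *ᵥ (δw - δwstar δx))]
      have h3 : (Jw *ᵥ (δw - δwstar δx)) ⬝ᵥ (Jw *ᵥ (δw - δwstar δx)) = 0 :=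
        le_antisymm h2 (hnn m _)
      have h4 : Jw *ᵥ (δw - δwstar δx) = 0 := dotProduct_self_eq_zero.mp h3
      have h5 : δw = δwstar δx := sub_eq_zero.mp (hJwinj _ h4)
      refine ⟨?_, h5⟩
      intro δx'
      have := hmin δx' (δwstar δx')
      rw [hval δx'] at this
      calc ψ δx = Φhat δx (δwstar δx) := (hval δx).symm
        _ ≤ Φhat δx δw := by
            rw [key δx δw, hval δx] at *
            nlinarith [hnn m (Jw *ᵥ (δw - δwstar δx))]
        _ ≤ ψ δx' := this
    · rintro ⟨hψmin, rfl⟩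
      intro δx' δw'
      rw [hval δx, key δx' δw']
      have := hψmin δx'
      nlinarith [hnn m (Jw *ᵥ (δw' - δwstar δx'))]
  · intro δx δw hmin
    have h1 : Φhat δx δw ≤ Φhat δx (δwstar δx) := hmin δx (δwstar δx)
    rw [hval δx] at h1
    have h2 : ψ δx ≤ Φhat δx δw := by
      rw [key δx δw]
      nlinarith [hnn m (Jw *ᵥ (δw - δwstar δx))]
    linarith
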